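/- arXiv:1302.0933 — 6 statements merged into one kernel-verified Lean document; each statement's English description precedes it below -/
import Mathlib

section
/- Let H be a subgroup of a finite group G, let g ∈ G, and let y ∈ ⟨H, H^g⟩. If H^y and H^g are conjugate in ⟨H^y, H^g⟩, then H and H^g are conjugate in ⟨H, H^g⟩. -/
open Pointwise

/-- `n` is a π-number: every prime dividing `n` lies in `π`. -/
def IsPiNumber (π : Set ℕ) (n : ℕ) : Prop := ∀ p : ℕ, p.Prime → p ∣ n → p ∈ π

/-- `H` is a π-Hall subgroup of `G`. -/
def IsHall (π : Set ℕ) {G : Type*} [Group G] (H : Subgroup G) : Prop :=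
  IsPiNumber π (Nat.card H) ∧ ∀ p : ℕ, p.Prime → p ∣ H.index → p ∉ π

/-- `H` is pronormal in `G`: for every `g`, `H` and `H^g = g⁻¹Hg` are conjugate in `⟨H, H^g⟩`. -/
def Pronormal {G : Type*} [Group G] (H : Subgroup G) : Prop :=
  ∀ g : G, ∃ x ∈ H ⊔ MulAut.conj g⁻¹ • H,
    MulAut.conj x⁻¹ • H = MulAut.conj g⁻¹ • H

/-- `H` is strongly pronormal in `G`. -/
def StronglyPronormal {G : Type*} [Group G] (H : Subgroup G) : Prop :=
  ∀ K : Subgroup G, K ≤ H → ∀ g : G, ∃ x ∈ H ⊔ MulAut.conj g⁻¹ • K,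
    MulAut.conj x⁻¹ • (MulAut.conj g⁻¹ • K) ≤ H

/-- `G` is π-separable. -/
def IsPiSeparable (π : Set ℕ) (G : Type*) [Group G] : Prop :=
  ∃ (n : ℕ) (c : Fin (n + 1) → Subgroup G),
    c 0 = ⊥ ∧ c (Fin.last n) = ⊤ ∧ Monotone c ∧ (∀ i, (c i).Normal) ∧
    ∀ i : Fin n,
      IsPiNumber π (Nat.card (↥(c i.succ) ⧸ (c i.castSucc).subgroupOf (c i.succ))) ∨
      IsPiNumber πᶜ (Nat.card (↥(c i.succ) ⧸ (c i.castSucc).subgroupOf (c i.succ)))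

/-- `G` satisfies `C_π`. -/
def SatisfiesC (π : Set ℕ) (G : Type*) [Group G] : Prop :=
  (∃ H : Subgroup G, IsHall π H) ∧
    ∀ H K : Subgroup G, IsHall π H → IsHall π K → ∃ g : G, MulAut.conj g • H = K

theorem stmt4 (G : Type*) [Group G] [Finite G] (H : Subgroup G) (g : G)
    (y : G) (hy : y ∈ H ⊔ MulAut.conj g⁻¹ • H)
    (h : ∃ z ∈ (MulAut.conj y⁻¹ • H) ⊔ (MulAut.conj g⁻¹ • H),
      MulAut.conj z⁻¹ • (MulAut.conj y⁻¹ • H) = MulAut.conj g⁻¹ • H) :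
    ∃ x ∈ H ⊔ MulAut.conj g⁻¹ • H, MulAut.conj x⁻¹ • H = MulAut.conj g⁻¹ • H := by
  obtain ⟨z, hz, hconj⟩ := h
  refine ⟨y * z, ?_, ?_⟩
  · have hHy : MulAut.conj y⁻¹ • H ≤ H ⊔ MulAut.conj g⁻¹ • H := by
      intro a ha
      rw [Subgroup.mem_smul_pointwise_iff_exists] at ha
      obtain ⟨b, hb, rfl⟩ := ha
      simp only [MulAut.smul_def, MulAut.conj_apply, inv_inv]
      exact mul_mem (mul_mem (inv_mem hy) (Subgroup.mem_sup_left hb)) hy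
    have hz' : z ∈ H ⊔ MulAut.conj g⁻¹ • H :=
      (sup_le hHy le_sup_right) hz
    exact mul_mem hy hz'
  · rw [← hconj, smul_smul, ← map_mul, mul_inv_rev]
end

section
/- Let G be a group with normal subgroups G₁, …, Gₙ such that [G_i, G_j] = 1 for i ≠ j and G = G₁⋯Gₙ. If H_i is a pronormal subgroup of G_i for each i, then H = ⟨H₁, …, Hₙ⟩ is pronormal in G. -/
/-! Write `g = ∏ gᵢ` with `gᵢ ∈ Gᵢ`. The factors other than `gᵢ` centralise `Gᵢ`, so conjugation
by `g` moves `Hᵢ` exactly as conjugation by `gᵢ` does. Pronormality of `Hᵢ` in `Gᵢ` provides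
`xᵢ ∈ ⟨Hᵢ, Hᵢ^{gᵢ}⟩ ≤ ⟨H, H^g⟩` with `Hᵢ^{xᵢ} = Hᵢ^{gᵢ}`, and for the same reason `x = ∏ xᵢ`
then satisfies `H^x = ⨆ Hᵢ^{xᵢ} = ⨆ Hᵢ^{gᵢ} = H^g`. -/

open Pointwise

namespace Subgroup

variable {G : Type*} [Group G]

theorem conj_smul_eq_self_of_mem_centralizer {K : Subgroup G} {c : G}
    (hc : c ∈ centralizer (K : Set G)) : MulAut.conj c • K = K :=
  conjAct_pointwise_smul_eq_self (centralizer_le_normalizer _ hc)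

theorem pointwise_smul_iSup {α ι : Type*} [Monoid α] [MulDistribMulAction α G] (a : α)
    (S : ι → Subgroup G) : a • ⨆ i, S i = ⨆ i, a • S i :=
  map_iSup _ _

theorem exists_conj_eq_of_pronormal_subgroupOf {H N : Subgroup G} (hHN : H ≤ N)
    (hH : Pronormal (H.subgroupOf N)) (a : N) :
    ∃ x : N, (x : G) ∈ H ⊔ MulAut.conj (a : G)⁻¹ • H ∧
      MulAut.conj (x : G)⁻¹ • H = MulAut.conj (a : G)⁻¹ • H := by
  obtain ⟨x, hx, hconj⟩ := hH a
  have hle : ∀ y : N, MulAut.conj (y : G) • H ≤ N := fun y => conj_smul_le_of_le hHN y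
  rw [conj_smul_subgroupOf hHN, conj_smul_subgroupOf hHN, subgroupOf_inj,
    inf_of_le_left (hle _), inf_of_le_left (hle _)] at hconj
  rw [conj_smul_subgroupOf hHN, ← subgroupOf_sup hHN (hle _)] at hx
  simp only [coe_inv] at hx hconj
  exact ⟨x, hx, hconj⟩

section CommutingFamily

variable {ι : Type*} [Fintype ι] {N : ι → Subgroup G}
  {hcomm : Pairwise fun i j : ι => ∀ x y : G, x ∈ N i → y ∈ N j → Commute x y}

theorem noncommPiCoprod_mem {K : Subgroup G} {f : ∀ i, N i} (hf : ∀ i, (f i : G) ∈ K) :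
    noncommPiCoprod hcomm f ∈ K := by
  rw [noncommPiCoprod_apply]
  exact noncommProd_mem _ _ fun i _ => hf i

theorem conj_noncommPiCoprod_smul_of_le (f : ∀ i, N i) {i : ι} {K : Subgroup G}
    (hK : K ≤ N i) : MulAut.conj (noncommPiCoprod hcomm f) • K = MulAut.conj (f i : G) • K := by
  classical
  have hsplit : f = Pi.mulSingle i (f i) * Function.update f i 1 := by
    ext j : 1
    rcases eq_or_ne j i with rfl | hj <;> simp [*]
  have hcent : noncommPiCoprod hcomm (Function.update f i 1) ∈ centralizer (K : Set G) := by
    refine noncommPiCoprod_mem fun j => ?_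
    rcases eq_or_ne j i with rfl | hj
    · simp [one_mem]
    · rw [Function.update_of_ne hj]
      exact fun y hy => (hcomm hj _ _ (f j).2 (hK hy)).eq.symm
  nth_rw 1 [hsplit]
  rw [map_mul, noncommPiCoprod_mulSingle, map_mul, mul_smul,
    conj_smul_eq_self_of_mem_centralizer hcent]

end CommutingFamily

end Subgroup

open Subgroup in
theorem pronormal_iSup_of_pronormal_subgroupOf {G ι : Type*} [Group G] [Fintype ι]
    {N H : ι → Subgroup G}
    (hcomm : Pairwise fun i j : ι => ∀ x y : G, x ∈ N i → y ∈ N j → Commute x y)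
    (hgen : ⨆ i, N i = ⊤) (hle : ∀ i, H i ≤ N i)
    (hH : ∀ i, Pronormal ((H i).subgroupOf (N i))) : Pronormal (⨆ i, H i) := by
  intro g
  obtain ⟨f, rfl⟩ : g ∈ (noncommPiCoprod hcomm).range := by
    rw [noncommPiCoprod_range, hgen]
    exact mem_top g
  choose x hx hconj using fun i => exists_conj_eq_of_pronormal_subgroupOf (hle i) (hH i) (f i)
  have hconj_inv (u : ∀ i, N i) (i : ι) :
      MulAut.conj (noncommPiCoprod hcomm u)⁻¹ • H i = MulAut.conj (u i : G)⁻¹ • H i := by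
    rw [← map_inv, conj_noncommPiCoprod_smul_of_le _ (hle i), Pi.inv_apply, coe_inv]
  refine ⟨noncommPiCoprod hcomm x, noncommPiCoprod_mem fun i => ?_, ?_⟩
  · have hxi := hx i
    rw [← hconj_inv] at hxi
    exact sup_le_sup (le_iSup H i) (pointwise_smul_le_pointwise_smul_iff.mpr (le_iSup H i)) hxi
  · rw [pointwise_smul_iSup, pointwise_smul_iSup]
    exact iSup_congr fun i => by rw [hconj_inv, hconj_inv, hconj]

theorem stmt6_general (G : Type*) [Group G] (n : ℕ) (Gs : Fin n → Subgroup G)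
    (hcomm : ∀ i j, i ≠ j → ∀ x ∈ Gs i, ∀ y ∈ Gs j, Commute x y)
    (hgen : (⨆ i, Gs i) = ⊤)
    (Hs : Fin n → Subgroup G) (hle : ∀ i, Hs i ≤ Gs i)
    (hprn : ∀ i, Pronormal ((Hs i).subgroupOf (Gs i))) :
    Pronormal (⨆ i, Hs i) :=
  pronormal_iSup_of_pronormal_subgroupOf (fun i j hij x y hx hy => hcomm i j hij x hx y hy)
    hgen hle hprn

theorem stmt6 (G : Type*) [Group G] (n : ℕ) (Gs : Fin n → Subgroup G)
    (hnorm : ∀ i, (Gs i).Normal)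
    (hcomm : ∀ i j, i ≠ j → ∀ x ∈ Gs i, ∀ y ∈ Gs j, Commute x y)
    (hgen : (⨆ i, Gs i) = ⊤)
    (Hs : Fin n → Subgroup G) (hle : ∀ i, Hs i ≤ Gs i)
    (hprn : ∀ i, Pronormal ((Hs i).subgroupOf (Gs i))) :
    Pronormal (⨆ i, Hs i) :=
  stmt6_general G n Gs hcomm hgen Hs hle hprn
end

section
/- Let G be a finite group, H a π-Hall subgroup of G, and A a normal subgroup with G = HA and H ∩ A pronormal in A. Then N_G(H ∩ A) is π-separable. -/
open Pointwise

/-!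
Write `K = H ⊓ A` and `N = N_G(K)`; the series `1 ≤ K ≤ A ⊓ N ≤ N` is normal in `N`. The bottom
factor is a subgroup of the π-group `H`. Since `H ≤ N`, also `NA = G`, so `|N : A ⊓ N| = |G : A|
= |H : K|` is a π-number. The middle factor has order dividing `|A : K| = |G : H|`, a π'-number
because `H` is a Hall subgroup.
-/

open Subgroup

theorem IsPiNumber.of_dvd {π : Set ℕ} {m n : ℕ} (hm : IsPiNumber π m) (hnm : n ∣ m) :
    IsPiNumber π n :=
  fun p hp hpn ↦ hm p hp (hpn.trans hnm)

theorem isPiSeparable_of_le_of_normal {π : Set ℕ} {N : Type*} [Group N] (K M : Subgroup N)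
    (hKM : K ≤ M) (hK : K.Normal) (hM : M.Normal) (hKπ : IsPiNumber π (Nat.card K))
    (hKMπ : IsPiNumber πᶜ (K.relIndex M)) (hMπ : IsPiNumber π M.index) :
    IsPiSeparable π N := by
  refine ⟨3, ![⊥, K, M, ⊤], rfl, rfl, ?_, ?_, ?_⟩
  · rw [Fin.monotone_iff_le_succ]
    intro i
    fin_cases i
    exacts [bot_le, hKM, le_top]
  · intro i
    fin_cases i
    exacts [normal_bot, hK, hM, normal_top]
  · intro i
    simp only [← index_eq_card]
    fin_cases i
    · left
      change IsPiNumber π ((⊥ : Subgroup N).relIndex K)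
      rwa [relIndex_bot_left]
    · right
      exact hKMπ
    · left
      change IsPiNumber π (M.relIndex ⊤)
      rwa [relIndex_top_right]

section Index

variable {G : Type*} [Group G] {H A : Subgroup G}

theorem relIndex_eq_index_of_sup_eq_top [A.Normal] (h : H ⊔ A = ⊤) :
    A.relIndex H = A.index := by
  rw [← relIndex_sup_right, h, relIndex_top_right]

theorem inf_relIndex_right_eq_index_of_sup_eq_top [A.Normal] [A.FiniteIndex]
    (h : H ⊔ A = ⊤) : (H ⊓ A).relIndex A = H.index := by
  refine Nat.eq_of_mul_eq_mul_right (Nat.pos_of_ne_zero A.index_ne_zero_of_finite) ?_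
  calc (H ⊓ A).relIndex A * A.index = (H ⊓ A).index := relIndex_mul_index inf_le_right
    _ = (H ⊓ A).relIndex H * H.index := (relIndex_mul_index inf_le_left).symm
    _ = H.index * A.index := by
      rw [inf_relIndex_left, relIndex_eq_index_of_sup_eq_top h, mul_comm]

theorem le_normalizer_inf_of_normal [A.Normal] : H ≤ normalizer ((H ⊓ A : Subgroup G) : Set G) :=
  (le_inf H.le_normalizer le_normalizer_of_normal).trans inf_normalizer_le_normalizer_inf

end Index

theorem stmt8_general (π : Set ℕ) (G : Type*) [Group G] [Finite G]
    (H A : Subgroup G) (hH : IsHall π H) (hA : A.Normal)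
    (hHA : H ⊔ A = ⊤) :
    IsPiSeparable π (Subgroup.normalizer ((H ⊓ A : Subgroup G) : Set G)) := by
  set K := H ⊓ A
  set N := normalizer (K : Set G)
  have hHN : H ≤ N := le_normalizer_inf_of_normal
  have hNA : N ⊔ A = ⊤ := top_le_iff.mp (hHA ▸ sup_le_sup_right hHN A)
  refine isPiSeparable_of_le_of_normal (K.subgroupOf N) (A.subgroupOf N)
    (subgroupOf_mono N inf_le_right) normal_in_normalizer (hA.subgroupOf N) ?_ ?_ ?_
  · rw [Nat.card_congr (subgroupOfEquivOfLe le_normalizer).toEquiv]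
    exact hH.1.of_dvd (card_dvd_of_le inf_le_left)
  · rw [← inf_subgroupOf_right A N, relIndex_subgroupOf inf_le_right]
    refine IsPiNumber.of_dvd (π := πᶜ) hH.2 ?_
    rw [← inf_relIndex_right_eq_index_of_sup_eq_top hHA]
    exact Dvd.intro _ (relIndex_mul_relIndex K (A ⊓ N) A (le_inf inf_le_right le_normalizer)
      inf_le_left)
  · refine hH.1.of_dvd ?_
    rw [← relIndex, relIndex_eq_index_of_sup_eq_top hNA, ← relIndex_eq_index_of_sup_eq_top hHA]
    exact relIndex_dvd_card A H

theorem stmt8 (π : Set ℕ) (G : Type*) [Group G] [Finite G]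
    (H A : Subgroup G) (hH : IsHall π H) (hA : A.Normal)
    (hHA : H ⊔ A = ⊤) (hprn : Pronormal ((H ⊓ A).subgroupOf A)) :
    IsPiSeparable π (Subgroup.normalizer ((H ⊓ A : Subgroup G) : Set G)) :=
  stmt8_general π G H A hH hA hHA
end

section
/- Every Sylow p-subgroup of a finite group is strongly pronormal. -/
open Pointwise

theorem stmt13 (G : Type*) [Group G] [Finite G] (p : ℕ) [Fact p.Prime]
    (P : Sylow p G) : StronglyPronormal (P : Subgroup G) := by
  intro K hK g
  set L : Subgroup G := MulAut.conj g⁻¹ • K with hLdef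
  set J : Subgroup G := (P : Subgroup G) ⊔ L with hJdef
  have hPJ : (P : Subgroup G) ≤ J := le_sup_left
  have hLJ : L ≤ J := le_sup_right
  have hKp : IsPGroup p K := P.2.to_le hK
  have hLp : IsPGroup p L := by
    rw [hLdef, Subgroup.pointwise_smul_def]
    exact hKp.map _
  have hLp' : IsPGroup p (L.subgroupOf J) :=
    hLp.of_equiv (Subgroup.subgroupOfEquivOfLe hLJ).symm
  obtain ⟨Q, hQ⟩ := hLp'.exists_le_sylow
  obtain ⟨x, hx⟩ := MulAction.exists_smul_eq J (P.subtype hPJ) Q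
  refine ⟨x, x.2, ?_⟩
  intro a ha
  rw [Subgroup.mem_pointwise_smul_iff_inv_smul_mem] at ha
  -- ha : (MulAut.conj x⁻¹)⁻¹ • a ∈ L, i.e. x * a * x⁻¹ ∈ L
  have ha' : (x : G) * a * (x : G)⁻¹ ∈ L := by simpa [mul_assoc] using ha
  have hmem : (⟨(x : G) * a * (x : G)⁻¹, hLJ ha'⟩ : J) ∈ Q := hQ ha'
  rw [← hx] at hmem
  have hmem' : (⟨(x : G) * a * (x : G)⁻¹, hLJ ha'⟩ : J)
      ∈ MulAut.conj x • ((P : Subgroup G).subgroupOf J) := hmem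
  rw [Subgroup.mem_pointwise_smul_iff_inv_smul_mem] at hmem'
  rw [Subgroup.mem_subgroupOf] at hmem'
  simpa [MulAut.smul_def, mul_assoc] using hmem'
end

section
/- Let n and m be natural numbers with n/2 < m < n−1. In the symmetric group Sym_n, the pointwise stabilizer of an (n−m)-element subset (isomorphic to Sym_m) is pronormal but not strongly pronormal. -/
open Pointwise

/-!
Write `F(Δ)` for the pointwise stabilizer; conjugation by `g` carries `F(Δ)` to `F(g • Δ)`.

Pronormality: for `B = g⁻¹ • Δ`, the bound `2|Δ| < n` leaves a point `c` outside `Δ ∪ B`. Then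
`⟨F(Δ), F(B)⟩` contains every transposition `(a b)` with `a ∈ B \ Δ`, `b ∈ Δ \ B`, namely
`(a c)(c b)(a c)`, and composing such transpositions carries `B` onto `Δ`.

Failure of strong pronormality: for `a, b ∉ Δ` and distinct `p, q ∈ Δ`, the subgroup
`⟨(a b)⟩ ≤ F(Δ)` has the conjugate `⟨(p q)⟩`. The join `⟨F(Δ), (p q)⟩` stabilizes `{p, q}`, so
conjugating `(p q)` by any of its elements gives a transposition moving a point of `Δ`.
-/

open MulAction Equiv

section FixingSubgroup

variable {M α : Type*} [Group M] [MulAction M α]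

theorem iInf_stabilizer_eq_fixingSubgroup (s : Set α) :
    ⨅ x ∈ s, stabilizer M x = fixingSubgroup M s := by
  ext m
  simp [Subgroup.mem_iInf, mem_fixingSubgroup_iff]

theorem MulAut.conj_smul_fixingSubgroup (g : M) (s : Set α) :
    MulAut.conj g • fixingSubgroup M s = fixingSubgroup M (g • s) :=
  (SubMulAction.fixingSubgroup_smul_eq_fixingSubgroup_map_conj s g).symm

end FixingSubgroup

theorem MulAut.conj_smul_zpowers {G : Type*} [Group G] (g x : G) :
    MulAut.conj g • Subgroup.zpowers x = Subgroup.zpowers (g * x * g⁻¹) :=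
  MonoidHom.map_zpowers (MulAut.conj g).toMonoidHom x

namespace Equiv.Perm

variable {α : Type*} [DecidableEq α]

theorem swap_mem_fixingSubgroup {s : Set α} {a b : α} (ha : a ∉ s) (hb : b ∉ s) :
    swap a b ∈ fixingSubgroup (Perm α) s :=
  (mem_fixingSubgroup_iff _).mpr fun _ hx =>
    swap_apply_of_ne_of_ne (ne_of_mem_of_not_mem hx ha) (ne_of_mem_of_not_mem hx hb)

theorem swap_mem_sup_fixingSubgroup {s t : Set α} {a b c : α} (ha : a ∉ s) (hb : b ∉ t)
    (hcs : c ∉ s) (hct : c ∉ t) :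
    swap a b ∈ fixingSubgroup (Perm α) s ⊔ fixingSubgroup (Perm α) t := by
  by_cases hbc : b = c
  · subst hbc
    exact Subgroup.mem_sup_left (swap_mem_fixingSubgroup ha hcs)
  by_cases hab : a = b
  · rw [hab, swap_self]
    exact one_mem _
  have hac : swap a c ∈ fixingSubgroup (Perm α) s ⊔ fixingSubgroup (Perm α) t :=
    Subgroup.mem_sup_left (swap_mem_fixingSubgroup ha hcs)
  rw [show swap a b = swap a c * swap c b * (swap a c)⁻¹ by
    rw [← swap_apply_apply, swap_apply_right, swap_apply_of_ne_of_ne (Ne.symm hab) hbc]]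
  exact mul_mem (mul_mem hac (Subgroup.mem_sup_right (swap_mem_fixingSubgroup hct hb)))
    (inv_mem hac)

theorem exists_mem_sup_fixingSubgroup_smul_eq {A B : Finset α} (hcard : A.card = B.card)
    {c : α} (hcA : c ∉ A) (hcB : c ∉ B) :
    ∃ x ∈ fixingSubgroup (Perm α) (A : Set α) ⊔ fixingSubgroup (Perm α) (B : Set α),
      x • B = A := by
  induction hk : (B \ A).card generalizing B with
  | zero =>
    have hBA : B ⊆ A := Finset.sdiff_eq_empty_iff_subset.mp (Finset.card_eq_zero.mp hk)
    exact ⟨1, one_mem _, by rw [one_smul, Finset.eq_of_subset_of_card_le hBA hcard.le]⟩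
  | succ k ih =>
    obtain ⟨a, ha⟩ : (B \ A).Nonempty := Finset.card_pos.mp (by omega)
    obtain ⟨b, hb⟩ : (A \ B).Nonempty :=
      Finset.card_pos.mp (by rw [Finset.card_sdiff_comm hcard, hk]; omega)
    rw [Finset.mem_sdiff] at ha hb
    set σ := swap a b
    have hσ : σ ∈ fixingSubgroup (Perm α) (A : Set α) ⊔ fixingSubgroup (Perm α) (B : Set α) :=
      swap_mem_sup_fixingSubgroup ha.2 hb.2 hcA hcB
    have hσB : σ • B \ A = (B \ A).erase a := by
      ext z
      rw [Finset.mem_sdiff, ← Finset.inv_smul_mem_iff, Finset.mem_erase, Finset.mem_sdiff,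
        Perm.smul_def, swap_inv]
      by_cases hza : z = a
      · subst hza
        simp [hb.2]
      by_cases hzb : z = b
      · subst hzb
        simp [hb.1]
      rw [swap_apply_of_ne_of_ne hza hzb]
      tauto
    obtain ⟨x, hx, hxB⟩ := ih (B := σ • B) (by rw [Finset.card_smul_finset, hcard])
      (fun hc => hcB (Finset.mem_sdiff.mp
        (Finset.mem_of_mem_erase (hσB ▸ Finset.mem_sdiff.mpr ⟨hc, hcA⟩))).1)
      (by rw [hσB, Finset.card_erase_of_mem (Finset.mem_sdiff.mpr ha), hk]; rfl)
    have hle : fixingSubgroup (Perm α) (A : Set α) ⊔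
          fixingSubgroup (Perm α) ((σ • B : Finset α) : Set α) ≤
        fixingSubgroup (Perm α) (A : Set α) ⊔ fixingSubgroup (Perm α) (B : Set α) := by
      rw [Finset.coe_smul_finset, ← MulAut.conj_smul_fixingSubgroup]
      exact sup_le le_sup_left (Subgroup.conj_smul_le_of_le le_sup_right ⟨σ, hσ⟩)
    exact ⟨x * σ, mul_mem (hle hx) hσ, by rw [mul_smul, hxB]⟩

theorem pronormal_fixingSubgroup [Fintype α] (Δ : Finset α) (h : 2 * Δ.card < Fintype.card α) :
    Pronormal (fixingSubgroup (Perm α) (Δ : Set α)) := by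
  intro g
  have hB : MulAut.conj g⁻¹ • fixingSubgroup (Perm α) (Δ : Set α) =
      fixingSubgroup (Perm α) ((g⁻¹ • Δ : Finset α) : Set α) := by
    rw [MulAut.conj_smul_fixingSubgroup, Finset.coe_smul_finset]
  obtain ⟨c, hc⟩ : (Δ ∪ g⁻¹ • Δ)ᶜ.Nonempty := by
    rw [← Finset.card_pos, Finset.card_compl]
    have := Finset.card_union_le Δ (g⁻¹ • Δ)
    rw [Finset.card_smul_finset] at this
    omega
  rw [Finset.mem_compl, Finset.mem_union, not_or] at hc
  obtain ⟨x, hx, hxB⟩ :=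
    exists_mem_sup_fixingSubgroup_smul_eq (Finset.card_smul_finset g⁻¹ Δ).symm hc.1 hc.2
  refine ⟨x, hB ▸ hx, ?_⟩
  rw [hB, MulAut.conj_smul_fixingSubgroup, ← Finset.coe_smul_finset, inv_smul_eq_iff.mpr hxB.symm]

theorem not_stronglyPronormal_fixingSubgroup {Δ : Set α} {p q a b : α} (hp : p ∈ Δ) (hq : q ∈ Δ)
    (hpq : p ≠ q) (ha : a ∉ Δ) (hb : b ∉ Δ) (hab : a ≠ b) :
    ¬ StronglyPronormal (fixingSubgroup (Perm α) Δ) := by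
  intro h
  set σ := swap a p * swap b q
  have hσa : σ a = p := by
    simp [σ, swap_apply_of_ne_of_ne hab (ne_of_mem_of_not_mem hq ha).symm]
  have hσb : σ b = q := by
    simp [σ, swap_apply_of_ne_of_ne (ne_of_mem_of_not_mem hq ha) hpq.symm]
  obtain ⟨x, hx, hle⟩ :=
    h (Subgroup.zpowers (swap a b)) (Subgroup.zpowers_le.mpr (swap_mem_fixingSubgroup ha hb)) σ⁻¹
  rw [inv_inv, MulAut.conj_smul_zpowers, ← swap_apply_apply, hσa, hσb] at hx hle
  have hstab : fixingSubgroup (Perm α) Δ ⊔ Subgroup.zpowers (swap p q) ≤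
      stabilizer (Perm α) ({p, q} : Set α) := by
    refine sup_le ((fixingSubgroup_antitone _ _ ?_).trans (fixingSubgroup_le_stabilizer _ _))
      (Subgroup.zpowers_le.mpr ?_)
    · exact Set.insert_subset hp (Set.singleton_subset_iff.mpr hq)
    · rw [mem_stabilizer_iff, Set.smul_set_insert, Set.smul_set_singleton, Perm.smul_def,
        Perm.smul_def, swap_apply_left, swap_apply_right, Set.pair_comm]
  have hxp : x⁻¹ p ∈ Δ := by
    have := Set.smul_mem_smul_set (a := x⁻¹) (Set.mem_insert p {q})
    rw [mem_stabilizer_iff.mp (inv_mem (hstab hx))] at this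
    rcases this with hmem | hmem <;> rw [Perm.smul_def] at hmem <;> rw [hmem] <;> assumption
  have hswap : swap (x⁻¹ p) (x⁻¹ q) ∈ fixingSubgroup (Perm α) Δ := by
    apply hle
    rw [MulAut.conj_smul_zpowers, ← swap_apply_apply]
    exact Subgroup.mem_zpowers _
  have := (mem_fixingSubgroup_iff _).mp hswap _ hxp
  rw [Perm.smul_def, swap_apply_left] at this
  exact hpq (x⁻¹.injective this).symm

end Equiv.Perm

theorem stmt14 (n m : ℕ) (h1 : n < 2 * m) (h2 : m < n - 1)
    (Δ : Finset (Fin n)) (hΔ : Δ.card = n - m)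
    (H : Subgroup (Equiv.Perm (Fin n)))
    (hH : H = ⨅ x ∈ Δ, MulAction.stabilizer (Equiv.Perm (Fin n)) x) :
    Pronormal H ∧ ¬ StronglyPronormal H := by
  have hH' : H = fixingSubgroup (Perm (Fin n)) (Δ : Set (Fin n)) :=
    hH.trans (iInf_stabilizer_eq_fixingSubgroup _)
  subst hH'
  obtain ⟨p, hp, q, hq, hpq⟩ := Finset.one_lt_card.mp (by omega : 1 < Δ.card)
  obtain ⟨a, ha, b, hb, hab⟩ := Finset.one_lt_card.mp
    (by rw [Finset.card_compl, Fintype.card_fin]; omega : 1 < Δᶜ.card)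
  rw [Finset.mem_compl] at ha hb
  exact ⟨Perm.pronormal_fixingSubgroup Δ (by rw [Fintype.card_fin]; omega),
    Perm.not_stronglyPronormal_fixingSubgroup hp hq hpq ha hb hab⟩
end

section
/- Let π be a set of primes with π′ ≠ ∅ and let X be a finite group possessing two π-Hall subgroups U and V that are not conjugate in X. Let p ∈ π′ and let G = X ≀ ℤ_p be the regular wreath product (the semidirect product of Y = X^p by the cyclic shift of order p). Then the subgroups H = V × U × ⋯ × U and K = U × ⋯ × U × V of Y are π-Hall subgroups of G that are not conjugate in ⟨H, K⟩ ≤ Y, yet H^τ = K for the shift automorphism τ; consequently H is not pronormal in G. -/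
open Pointwise

lemma my_mem_map_inl {N G' : Type*} [Group N] [Group G'] {φ : G' →* MulAut N}
    (S : Subgroup N) (y : N ⋊[φ] G') :
    y ∈ S.map SemidirectProduct.inl ↔ y.left ∈ S ∧ y.right = 1 := by
  constructor
  · rintro ⟨x, hx, rfl⟩
    simpa using hx
  · rintro ⟨h1, h2⟩
    exact ⟨y.left, h1, by ext <;> simp [h2]⟩

lemma my_card_pi {ι : Type*} [Fintype ι] {G : Type*} [Group G] (A : ι → Subgroup G) :
    Nat.card (Subgroup.pi Set.univ A) = ∏ i, Nat.card (A i) := by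
  rw [← Nat.card_pi]
  exact Nat.card_congr
    ⟨fun f i => ⟨f.1 i, f.2 i (Set.mem_univ i)⟩,
     fun g => ⟨fun i => (g i).1, fun i _ => (g i).2⟩,
     fun f => rfl, fun g => rfl⟩

lemma my_hall_piece {π : Set ℕ} {X : Type*} [Group X] [Finite X]
    {U V : Subgroup X} (hU : IsHall π U) (hV : IsHall π V)
    {p : ℕ} [Fact p.Prime] (hp : p ∉ π)
    (φ : Multiplicative (ZMod p) →* MulAut (ZMod p → X)) (c : ZMod p) :
    IsHall π ((Subgroup.pi Set.univ fun i : ZMod p => if i = c then V else U).map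
      (SemidirectProduct.inl (φ := φ))) := by
  have hpp : p.Prime := Fact.out
  have hinj : Function.Injective (SemidirectProduct.inl (φ := φ)) :=
    SemidirectProduct.inl_injective
  set S := Subgroup.pi Set.univ fun i : ZMod p => if i = c then V else U with hS
  constructor
  · intro q hq hdvd
    have hcard : Nat.card (S.map (SemidirectProduct.inl (φ := φ))) = Nat.card S :=
      (Nat.card_congr (Subgroup.equivMapOfInjective S _ hinj).toEquiv).symm
    rw [hcard, hS, my_card_pi] at hdvd
    obtain ⟨i, -, hi⟩ := (hq.prime.dvd_finset_prod_iff _).mp hdvd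
    by_cases h : i = c
    · rw [if_pos h] at hi; exact hV.1 q hq hi
    · rw [if_neg h] at hi; exact hU.1 q hq hi
  · intro q hq hdvd hqπ
    have hidx : (S.map (SemidirectProduct.inl (φ := φ))).index =
        S.index * (SemidirectProduct.inl (φ := φ)).range.index := by
      rw [Subgroup.index_map, (MonoidHom.ker_eq_bot_iff _).mpr hinj, sup_bot_eq]
    have hri : (SemidirectProduct.inl (φ := φ)).range.index = p := by
      rw [SemidirectProduct.range_inl_eq_ker_rightHom, Subgroup.index_ker,
        MonoidHom.range_eq_top.mpr SemidirectProduct.rightHom_surjective]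
      rw [Nat.card_congr Subgroup.topEquiv.toEquiv,
        Nat.card_congr Multiplicative.ofAdd.symm, Nat.card_zmod]
    rw [hidx, hri, hS, Subgroup.index_pi] at hdvd
    rcases (Nat.Prime.dvd_mul hq).mp hdvd with h | h
    · obtain ⟨i, -, hi⟩ := (hq.prime.dvd_finset_prod_iff _).mp h
      by_cases hic : i = c
      · rw [if_pos hic] at hi; exact hV.2 q hq hi hqπ
      · rw [if_neg hic] at hi; exact hU.2 q hq hi hqπ
    · exact hp (((Nat.prime_dvd_prime_iff_eq hq hpp).mp h) ▸ hqπ)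

theorem stmt15 (π : Set ℕ) (X : Type*) [Group X] [Finite X]
    (U V : Subgroup X) (hU : IsHall π U) (hV : IsHall π V)
    (hnc : ¬∃ x : X, MulAut.conj x • U = V)
    (p : ℕ) [Fact p.Prime] (hp : p ∉ π)
    (φ : Multiplicative (ZMod p) →* MulAut (ZMod p → X))
    (hφ : ∀ (z : Multiplicative (ZMod p)) (f : ZMod p → X) (i : ZMod p),
      φ z f i = f (i + z.toAdd))
    (H K : Subgroup ((ZMod p → X) ⋊[φ] Multiplicative (ZMod p)))
    (hH : H = (Subgroup.pi Set.univ fun i : ZMod p => if i = 0 then V else U).map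
      SemidirectProduct.inl)
    (hK : K = (Subgroup.pi Set.univ fun i : ZMod p => if i = -1 then V else U).map
      SemidirectProduct.inl) :
    IsHall π H ∧ IsHall π K ∧
      (¬∃ x ∈ H ⊔ K, MulAut.conj x⁻¹ • H = K) ∧
      MulAut.conj ((SemidirectProduct.inr (Multiplicative.ofAdd (-1 : ZMod p)) :
        (ZMod p → X) ⋊[φ] Multiplicative (ZMod p)))⁻¹ • H = K ∧
      ¬ Pronormal H := by
  have hpp : p.Prime := Fact.out
  haveI : Fact (1 < p) := ⟨hpp.one_lt⟩
  have hne : (0 : ZMod p) ≠ (-1 : ZMod p) := by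
    intro h
    have := congrArg Neg.neg h
    simp at this
  set A : ZMod p → Subgroup X := fun i : ZMod p => if i = 0 then V else U with hA
  set B : ZMod p → Subgroup X := fun i : ZMod p => if i = -1 then V else U with hB
  have hA0 : A 0 = V := if_pos rfl
  have hB0 : B 0 = U := if_neg hne
  have hAB : ∀ j : ZMod p, A (j + 1) = B j := by
    intro j
    by_cases hj : j = -1
    · subst hj
      simp [hA, hB]
    · have h1 : j + 1 ≠ 0 := fun hc => hj (by linear_combination hc)
      simp [hA, hB, h1, hj]
  set t : Multiplicative (ZMod p) := Multiplicative.ofAdd (-1 : ZMod p) with ht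
  set τ : (ZMod p → X) ⋊[φ] Multiplicative (ZMod p) := SemidirectProduct.inr t with hτdef
  have h3 : ¬∃ x ∈ H ⊔ K, MulAut.conj x⁻¹ • H = K := by
    rintro ⟨x, hx, heq⟩
    have hxr : x.right = 1 := by
      have hle : H ⊔ K ≤ (SemidirectProduct.inl (φ := φ)).range := by
        rw [hH, hK]
        exact sup_le (Subgroup.map_le_range _ _) (Subgroup.map_le_range _ _)
      obtain ⟨w, hw⟩ := hle hx
      rw [← hw]; simp
    set f : ZMod p → X := x.left with hf
    have hx' : x = SemidirectProduct.inl f := by ext <;> simp [hf, hxr]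
    have key : ∀ v : X, v ∈ U ↔ f 0 * v * (f 0)⁻¹ ∈ V := by
      intro v
      have hmem : (SemidirectProduct.inl (Pi.mulSingle 0 v) : _ ⋊[φ] _) ∈ K ↔
          (SemidirectProduct.inl (Pi.mulSingle 0 v) : _ ⋊[φ] _) ∈ MulAut.conj x⁻¹ • H := by
        rw [heq]
      rw [Subgroup.mem_pointwise_smul_iff_inv_smul_mem] at hmem
      have hsm : (MulAut.conj x⁻¹)⁻¹ • (SemidirectProduct.inl (Pi.mulSingle 0 v) : _ ⋊[φ] _)
          = SemidirectProduct.inl (f * Pi.mulSingle 0 v * f⁻¹) := by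
        rw [← map_inv, inv_inv, MulAut.smul_def, MulAut.conj_apply, hx',
          ← map_inv, ← map_mul, ← map_mul]
      rw [hsm, hK, hH, my_mem_map_inl, my_mem_map_inl] at hmem
      simp only [SemidirectProduct.left_inl, SemidirectProduct.right_inl, and_true,
        Subgroup.mem_pi, Set.mem_univ, forall_true_left] at hmem
      constructor
      · intro hv
        have h0 := hmem.mp (by
          intro i
          by_cases hi : i = 0
          · subst hi
            rw [hB0]
            simpa using hv
          · simp only [Pi.mulSingle_apply, if_neg hi]
            exact one_mem _) 0
        rw [hA0] at h0
        simpa using h0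
      · intro hv
        have h0 := hmem.mpr (by
          intro i
          by_cases hi : i = 0
          · subst hi
            rw [hA0]
            simpa using hv
          · simp only [Pi.mul_apply, Pi.inv_apply, Pi.mulSingle_apply, if_neg hi,
              mul_one, mul_inv_cancel]
            exact one_mem _) 0
        rw [hB0] at h0
        simpa using h0
    apply hnc
    refine ⟨f 0, ?_⟩
    ext w
    rw [Subgroup.mem_pointwise_smul_iff_inv_smul_mem]
    have hsm : (MulAut.conj (f 0))⁻¹ • w = (f 0)⁻¹ * w * f 0 := by
      rw [← map_inv, MulAut.smul_def, MulAut.conj_apply, inv_inv]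
    rw [hsm, key ((f 0)⁻¹ * w * f 0)]
    have hw : f 0 * ((f 0)⁻¹ * w * f 0) * (f 0)⁻¹ = w := by group
    rw [hw]
  have h4 : MulAut.conj τ⁻¹ • H = K := by
    ext y
    rw [Subgroup.mem_pointwise_smul_iff_inv_smul_mem]
    have hsm : (MulAut.conj τ⁻¹)⁻¹ • y = τ * y * τ⁻¹ := by
      rw [← map_inv, inv_inv, MulAut.smul_def, MulAut.conj_apply]
    have hcomp : τ * y * τ⁻¹ = ⟨φ t y.left, y.right⟩ := by
      ext
      · simp [hτdef]
      · simp [hτdef, mul_comm]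
    rw [hsm, hcomp, hH, hK, my_mem_map_inl, my_mem_map_inl]
    simp only [Subgroup.mem_pi, Set.mem_univ, forall_true_left]
    constructor
    · rintro ⟨h1, h2⟩
      refine ⟨fun j => ?_, h2⟩
      have hj := h1 (j + 1)
      rw [hφ] at hj
      simp only [ht, toAdd_ofAdd] at hj
      rw [show j + 1 + -1 = j from by ring] at hj
      exact hAB j ▸ hj
    · rintro ⟨h1, h2⟩
      refine ⟨fun i => ?_, h2⟩
      rw [hφ]
      simp only [ht, toAdd_ofAdd]
      have he : (i + -1) + 1 = i := by ring
      have hAi : A i = B (i + -1) := by rw [← hAB (i + -1), he]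
      exact hAi ▸ h1 (i + -1)
  have h1 : IsHall π H := by
    rw [hH]
    exact my_hall_piece hU hV hp φ 0
  have h2 : IsHall π K := by
    rw [hK]
    exact my_hall_piece hU hV hp φ (-1)
  refine ⟨h1, h2, h3, h4, ?_⟩
  intro hpro
  obtain ⟨x, hx, hxeq⟩ := hpro τ
  rw [h4] at hx hxeq
  exact h3 ⟨x, hx, hxeq⟩
end
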